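/- Let α∈(0,1). For every integer r≥1, ∑_{i=1}^{r} b_{r,i} p_α(i) = −(−1)^r p_α(r), where b_{r,i}=(−1)^{r−i}(i−α)^{(r−i)}/(r−i)!. -/
import Mathlib


noncomputable section

/-- Rising factorial `(a)^(m) = a (a+1) ⋯ (a+m-1)` of a real number. -/
def risingFactorial (a : ℝ) : ℕ → ℝ
  | 0 => 1
  | m + 1 => risingFactorial a m * (a + m)

/-- Sibuya probabilities `p_α(r) = α (1-α)^(r-1) / r!` for `r ≥ 1`. -/
def sibuya (α : ℝ) (r : ℕ) : ℝ :=
  α * risingFactorial (1 - α) (r - 1) / (Nat.factorial r : ℝ)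

/-- The coefficients `b_{r,i} = (-1)^(r-i) (i-α)^(r-i) / (r-i)!` for `1 ≤ i ≤ r`. -/
def bCoef (α : ℝ) (r i : ℕ) : ℝ :=
  (-1 : ℝ) ^ (r - i) * risingFactorial ((i : ℝ) - α) (r - i) / (Nat.factorial (r - i) : ℝ)

lemma risingFactorial_add (a : ℝ) (m n : ℕ) :
    risingFactorial a (m + n) = risingFactorial a m * risingFactorial (a + m) n := by
  induction n with
  | zero => simp [risingFactorial]
  | succ n ih =>
      show risingFactorial a (m + n) * (a + ((m + n : ℕ) : ℝ)) = _
      rw [ih]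
      show _ = risingFactorial a m * (risingFactorial (a + m) n * (a + m + n))
      push_cast
      ring

lemma key_term (α : ℝ) (r i : ℕ) (h1 : 1 ≤ i) (h2 : i ≤ r) :
    bCoef α r i * sibuya α i = (-1 : ℝ) ^ (r - i) * (r.choose i : ℝ) * sibuya α r := by
  have hrf : risingFactorial (1 - α) (i - 1) * risingFactorial ((i : ℝ) - α) (r - i)
      = risingFactorial (1 - α) (r - 1) := by
    have hm : (i - 1) + (r - i) = r - 1 := by omega
    have hc : (1 - α) + ((i - 1 : ℕ) : ℝ) = (i : ℝ) - α := by
      have : ((i - 1 : ℕ) : ℝ) = (i : ℝ) - 1 := by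
        push_cast [h1]; ring
      rw [this]; ring
    have := risingFactorial_add (1 - α) (i - 1) (r - i)
    rw [hm, hc] at this
    exact this.symm
  have hfac : (r.factorial : ℝ) = (r.choose i : ℝ) * (i.factorial : ℝ) * ((r - i).factorial : ℝ) := by
    exact_mod_cast (Nat.choose_mul_factorial_mul_factorial h2).symm
  have hif : (i.factorial : ℝ) ≠ 0 := Nat.cast_ne_zero.2 (Nat.factorial_ne_zero _)
  have hrif : ((r - i).factorial : ℝ) ≠ 0 := Nat.cast_ne_zero.2 (Nat.factorial_ne_zero _)
  have hrf' : (r.factorial : ℝ) ≠ 0 := Nat.cast_ne_zero.2 (Nat.factorial_ne_zero _)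
  unfold bCoef sibuya
  rw [← hrf, hfac]
  have hch : (r.choose i : ℝ) ≠ 0 :=
    Nat.cast_ne_zero.2 (Nat.choose_pos h2).ne'
  field_simp

/-- For every `r ≥ 1`, `∑_{i=1}^r b_{r,i} p_α(i) = -(-1)^r p_α(r)`. -/
theorem sum_bCoef_sibuya (α : ℝ) (hα0 : 0 < α) (hα1 : α < 1) (r : ℕ) (hr : 1 ≤ r) :
    ∑ i ∈ Finset.Icc 1 r, bCoef α r i * sibuya α i = -(-1 : ℝ) ^ r * sibuya α r := by
  have hstep : ∑ i ∈ Finset.Icc 1 r, bCoef α r i * sibuya α i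
      = (∑ i ∈ Finset.Icc 1 r, (-1 : ℝ) ^ (r - i) * (r.choose i : ℝ)) * sibuya α r := by
    rw [Finset.sum_mul]
    refine Finset.sum_congr rfl ?_
    intro i hi
    obtain ⟨h1, h2⟩ := Finset.mem_Icc.mp hi
    exact key_term α r i h1 h2
  rw [hstep]
  congr 1
  -- ∑ i ∈ Icc 1 r, (-1)^(r-i) * choose r i = -(-1)^r
  have hsgn : ∀ i ∈ Finset.Icc 1 r,
      (-1 : ℝ) ^ (r - i) * (r.choose i : ℝ) = (-1 : ℝ) ^ r * ((-1 : ℝ) ^ i * (r.choose i : ℝ)) := by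
    intro i hi
    obtain ⟨h1, h2⟩ := Finset.mem_Icc.mp hi
    have h3 : (-1 : ℝ) ^ (r - i) * (-1 : ℝ) ^ i = (-1 : ℝ) ^ r := by
      rw [← pow_add, Nat.sub_add_cancel h2]
    have h4 : ((-1 : ℝ) ^ i) * ((-1 : ℝ) ^ i) = 1 := by
      rw [← pow_add]
      exact Even.neg_one_pow ⟨i, rfl⟩
    calc (-1 : ℝ) ^ (r - i) * (r.choose i : ℝ)
        = ((-1 : ℝ) ^ (r - i) * ((-1 : ℝ) ^ i * (-1 : ℝ) ^ i)) * (r.choose i : ℝ) := by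
          rw [h4, mul_one]
      _ = ((-1 : ℝ) ^ (r - i) * (-1 : ℝ) ^ i) * ((-1 : ℝ) ^ i * (r.choose i : ℝ)) := by ring
      _ = (-1 : ℝ) ^ r * ((-1 : ℝ) ^ i * (r.choose i : ℝ)) := by rw [h3]
  rw [Finset.sum_congr rfl hsgn, ← Finset.mul_sum]
  have halt : ∑ i ∈ Finset.range (r + 1), (-1 : ℝ) ^ i * (r.choose i : ℝ) = 0 := by
    have h := Int.alternating_sum_range_choose (n := r)
    rw [if_neg (Nat.one_le_iff_ne_zero.mp hr)] at h
    exact_mod_cast h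
  have hsplit : ∑ i ∈ Finset.range (r + 1), (-1 : ℝ) ^ i * (r.choose i : ℝ)
      = (∑ i ∈ Finset.Icc 1 r, (-1 : ℝ) ^ i * (r.choose i : ℝ)) + 1 := by
    rw [Finset.sum_range_succ'] 
    simp only [pow_zero, Nat.choose_zero_right, Nat.cast_one, one_mul]
    congr 1
    rw [show Finset.Icc 1 r = Finset.Ico 1 (r + 1) by rw [Finset.Ico_add_one_right_eq_Icc],
      Finset.sum_Ico_eq_sum_range]
    simp [add_comm]
  have : ∑ i ∈ Finset.Icc 1 r, (-1 : ℝ) ^ i * (r.choose i : ℝ) = -1 := by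
    rw [hsplit] at halt; linarith
  rw [this]
  ring

end
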